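/- arXiv:1412.0102 — 8 statements merged into one kernel-verified Lean document; each statement's English description precedes it below -/
import Mathlib

section
/- For 0 < a < b, the integral of 1/(x·sqrt((b-x)(x-a))) over [a,b] equals π/sqrt(ab). -/
/-!
With `t = 1 / x` the integral becomes the arcsine integral `∫ dt / √((b t - 1)(1 - a t))` over
`[1/b, 1/a]`. Accordingly `arcsin (normalizedRecip a b x) / √(ab)` is an antiderivative on `(a, b)`
that extends continuously to `[a, b]` with values `∓π / (2√(ab))` at the ends. The integrand is
nonnegative, so integrability of this improper integral comes with the fundamental theorem of
calculus.
-/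

open Real Set

/-- The affine map sending `1 / a ↦ -1` and `1 / b ↦ 1`, evaluated at `1 / x`. -/
noncomputable def normalizedRecip (a b x : ℝ) : ℝ :=
  ((a + b) * x - 2 * (a * b)) / ((b - a) * x)

section NormalizedRecip

variable {a b x : ℝ}

theorem normalizedRecip_left (ha : a ≠ 0) (hab : a ≠ b) : normalizedRecip a b a = -1 := by
  have : b - a ≠ 0 := sub_ne_zero.2 hab.symm
  rw [normalizedRecip]
  field_simp
  ring

theorem normalizedRecip_right (hb : b ≠ 0) (hab : a ≠ b) : normalizedRecip a b b = 1 := by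
  have : b - a ≠ 0 := sub_ne_zero.2 hab.symm
  rw [normalizedRecip]
  field_simp
  ring

theorem continuousOn_normalizedRecip (hab : a ≠ b) : ContinuousOn (normalizedRecip a b) {0}ᶜ :=
  ContinuousOn.div (by fun_prop) (by fun_prop) fun _ hx =>
    mul_ne_zero (sub_ne_zero.2 hab.symm) hx

theorem hasDerivAt_normalizedRecip (hab : a ≠ b) (hx : x ≠ 0) :
    HasDerivAt (normalizedRecip a b) (2 * (a * b) / ((b - a) * x ^ 2)) x := by
  have hba : b - a ≠ 0 := sub_ne_zero.2 hab.symm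
  have hnum : HasDerivAt (fun y => (a + b) * y - 2 * (a * b)) (a + b) x := by
    simpa using ((hasDerivAt_id x).const_mul (a + b)).sub_const (2 * (a * b))
  have hden : HasDerivAt (fun y => (b - a) * y) (b - a) x := by
    simpa using (hasDerivAt_id x).const_mul (b - a)
  refine (hnum.div hden (mul_ne_zero hba hx)).congr_deriv ?_
  field_simp
  ring

theorem one_sub_normalizedRecip_sq (hab : a ≠ b) (hx : x ≠ 0) :
    1 - normalizedRecip a b x ^ 2 = 4 * (a * b) * ((b - x) * (x - a)) / ((b - a) * x) ^ 2 := by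
  have : b - a ≠ 0 := sub_ne_zero.2 hab.symm
  rw [normalizedRecip]
  field_simp
  ring

theorem sqrt_one_sub_normalizedRecip_sq (ha : 0 < a) (hx : x ∈ Ioo a b) :
    √(1 - normalizedRecip a b x ^ 2) = 2 * √(a * b) * √((b - x) * (x - a)) / ((b - a) * x) := by
  have hab : a < b := hx.1.trans hx.2
  have hx0 : 0 < x := ha.trans hx.1
  have hba : 0 < b - a := sub_pos.2 hab
  have hprod : 0 ≤ (b - x) * (x - a) := mul_nonneg (sub_pos.2 hx.2).le (sub_pos.2 hx.1).le
  have hsquare : 4 * (a * b) * ((b - x) * (x - a)) / ((b - a) * x) ^ 2 =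
      (2 * √(a * b) * √((b - x) * (x - a)) / ((b - a) * x)) ^ 2 := by
    simp only [div_pow, mul_pow, sq_sqrt hprod, sq_sqrt (mul_pos ha (ha.trans hab)).le]
    ring
  rw [one_sub_normalizedRecip_sq hab.ne hx0.ne', hsquare, sqrt_sq (by positivity)]

end NormalizedRecip

theorem hasDerivAt_arcsin_normalizedRecip_div {a b x : ℝ} (ha : 0 < a) (hx : x ∈ Ioo a b) :
    HasDerivAt (fun y => arcsin (normalizedRecip a b y) / √(a * b))
      (1 / (x * √((b - x) * (x - a)))) x := by
  have hab : a < b := hx.1.trans hx.2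
  have hx0 : 0 < x := ha.trans hx.1
  have hba : 0 < b - a := sub_pos.2 hab
  have habpos : 0 < a * b := mul_pos ha (ha.trans hab)
  have hprod : 0 < (b - x) * (x - a) := mul_pos (sub_pos.2 hx.2) (sub_pos.2 hx.1)
  have hu : 0 < 1 - normalizedRecip a b x ^ 2 := by
    rw [one_sub_normalizedRecip_sq hab.ne hx0.ne']
    positivity
  have harcsin := hasDerivAt_arcsin (x := normalizedRecip a b x)
    (by nlinarith [sq_nonneg (normalizedRecip a b x - 1)])
    (by nlinarith [sq_nonneg (normalizedRecip a b x + 1)])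
  refine ((harcsin.comp x (hasDerivAt_normalizedRecip hab.ne hx0.ne')).div_const _).congr_deriv ?_
  rw [sqrt_one_sub_normalizedRecip_sq ha hx]
  have : 0 < √(a * b) := sqrt_pos.2 habpos
  have : 0 < √((b - x) * (x - a)) := sqrt_pos.2 hprod
  field_simp
  rw [sq_sqrt habpos.le]

theorem integral_inv_x_div_sqrt (a b : ℝ) (ha : 0 < a) (hab : a < b) :
    ∫ x in a..b, 1 / (x * Real.sqrt ((b - x) * (x - a))) = Real.pi / Real.sqrt (a * b) := by
  set F : ℝ → ℝ := fun y => arcsin (normalizedRecip a b y) / √(a * b)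
  have hF_cont : ContinuousOn F (Icc a b) :=
    ((continuous_arcsin.comp_continuousOn (continuousOn_normalizedRecip hab.ne)).div_const _).mono
      fun x hx => (ha.trans_le hx.1).ne'
  have hF_deriv : ∀ x ∈ Ioo a b, HasDerivAt F (1 / (x * √((b - x) * (x - a)))) x :=
    fun x hx => hasDerivAt_arcsin_normalizedRecip_div ha hx
  have hF'_nonneg : ∀ x ∈ Ioo a b, 0 ≤ 1 / (x * √((b - x) * (x - a))) := fun x hx => by
    have : 0 < x := ha.trans hx.1
    positivity
  have hint :
      IntervalIntegrable (fun x => 1 / (x * √((b - x) * (x - a)))) MeasureTheory.volume a b :=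
    (intervalIntegrable_iff_integrableOn_Ioc_of_le hab.le).2
      (intervalIntegral.integrableOn_deriv_of_nonneg hF_cont hF_deriv hF'_nonneg)
  rw [intervalIntegral.integral_eq_sub_of_hasDerivAt_of_le hab.le hF_cont hF_deriv hint]
  simp only [F, normalizedRecip_right (ha.trans hab).ne' hab.ne, normalizedRecip_left ha.ne' hab.ne,
    arcsin_one, arcsin_neg_one]
  ring
end

section
/- For 0 < a < b, the integral of 1/(x²·sqrt((b-x)(x-a))) over [a,b] equals (a+b)π/(2(ab)^{3/2}). -/
/-!
With `W x = √((b - x) * (x - a))` and `z x = ((a + b) * x - 2 * a * b) / ((b - a) * x)`, one has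
`1 - z x ^ 2 = 4 * a * b * W x ^ 2 / ((b - a) * x) ^ 2`, so `arcsin (z x) / √(a * b)` is a primitive
of `1 / (x * W x)`, while `(W x / x)' = (2 * a * b - (a + b) * x) / (2 * x ^ 2 * W x)`. Combining the two,
`(W x / x + (a + b) / 2 * arcsin (z x) / √(a * b)) / (a * b)` is a primitive of the integrand.
`W` vanishes at both ends and `z` runs from `-1` to `1`, which leaves `(a + b) / 2 * π / √(a * b) / (a * b)`.
The integrand is nonnegative, so it is integrable as the derivative of a function continuous on `[a, b]`.
-/

open Real Set MeasureTheory intervalIntegral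

noncomputable def arcsinArg (a b x : ℝ) : ℝ :=
  ((a + b) * x - 2 * (a * b)) / ((b - a) * x)

noncomputable def antiderivInvXsqDivSqrt (a b x : ℝ) : ℝ :=
  (√((b - x) * (x - a)) / x + (a + b) / 2 * (arcsin (arcsinArg a b x) / √(a * b))) / (a * b)

section

variable {a b x : ℝ}

lemma arcsinArg_left (ha : a ≠ 0) (hab : a ≠ b) : arcsinArg a b a = -1 := by
  have : b - a ≠ 0 := sub_ne_zero.2 hab.symm
  rw [arcsinArg]
  field_simp
  ring

lemma arcsinArg_right (hb : b ≠ 0) (hab : a ≠ b) : arcsinArg a b b = 1 := by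
  have : b - a ≠ 0 := sub_ne_zero.2 hab.symm
  rw [arcsinArg]
  field_simp
  ring

lemma one_sub_arcsinArg_sq (hx : x ≠ 0) (hab : a ≠ b) :
    1 - arcsinArg a b x ^ 2 = 4 * (a * b) * ((b - x) * (x - a)) / ((b - a) * x) ^ 2 := by
  have : b - a ≠ 0 := sub_ne_zero.2 hab.symm
  rw [arcsinArg]
  field_simp
  ring

lemma hasDerivAt_arcsinArg (hx : x ≠ 0) (hab : a ≠ b) :
    HasDerivAt (arcsinArg a b) (2 * (a * b) / ((b - a) * x ^ 2)) x := by
  have : b - a ≠ 0 := sub_ne_zero.2 hab.symm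
  have h := (((hasDerivAt_id x).const_mul (a + b)).sub_const (2 * (a * b))).div
    ((hasDerivAt_id x).const_mul (b - a)) (mul_ne_zero this hx)
  refine h.congr_deriv ?_
  simp only [id, mul_one]
  field_simp
  ring

lemma continuousOn_arcsinArg (hab : a ≠ b) {s : Set ℝ} (hs : ∀ x ∈ s, x ≠ 0) :
    ContinuousOn (arcsinArg a b) s := by
  have : b - a ≠ 0 := sub_ne_zero.2 hab.symm
  unfold arcsinArg
  fun_prop (disch := exact fun x hx => mul_ne_zero this (hs x hx))

lemma sqrt_one_sub_arcsinArg_sq (ha : 0 < a) (hax : a < x) (hxb : x < b) :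
    √(1 - arcsinArg a b x ^ 2) = 2 * √(a * b) * √((b - x) * (x - a)) / ((b - a) * x) := by
  have hab : a < b := hax.trans hxb
  have hx : 0 < x := ha.trans hax
  have hb : 0 < b := hx.trans hxb
  rw [one_sub_arcsinArg_sq hx.ne' hab.ne, sqrt_div' _ (sq_nonneg _),
    sqrt_sq (mul_pos (sub_pos.2 hab) hx).le, sqrt_mul (by positivity), sqrt_mul (by norm_num),
    show (4 : ℝ) = 2 ^ 2 by norm_num, sqrt_sq zero_le_two]

lemma hasDerivAt_arcsin_arcsinArg_div_sqrt (ha : 0 < a) (hax : a < x) (hxb : x < b) :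
    HasDerivAt (fun y => arcsin (arcsinArg a b y) / √(a * b))
      (1 / (x * √((b - x) * (x - a)))) x := by
  have hx : 0 < x := ha.trans hax
  have hab : a < b := hax.trans hxb
  have hab' : 0 < a * b := mul_pos ha (ha.trans hab)
  have hW : 0 < √((b - x) * (x - a)) := sqrt_pos.2 (mul_pos (sub_pos.2 hxb) (sub_pos.2 hax))
  have hone : 0 < 1 - arcsinArg a b x ^ 2 := by
    rw [one_sub_arcsinArg_sq hx.ne' hab.ne]
    positivity
  have h := ((hasDerivAt_arcsin (by nlinarith) (by nlinarith)).comp x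
    (hasDerivAt_arcsinArg hx.ne' hab.ne)).div_const (√(a * b))
  refine h.congr_deriv ?_
  rw [sqrt_one_sub_arcsinArg_sq ha hax hxb]
  have : 0 < √(a * b) := sqrt_pos.2 hab'
  have : 0 < b - a := sub_pos.2 hab
  field_simp
  rw [sq_sqrt hab'.le]

lemma hasDerivAt_sqrt_mul_sub_div (hax : a < x) (hxb : x < b) (hx : x ≠ 0) :
    HasDerivAt (fun y => √((b - y) * (y - a)) / y)
      ((2 * (a * b) - (a + b) * x) / (2 * x ^ 2 * √((b - x) * (x - a)))) x := by
  have hW : 0 < (b - x) * (x - a) := mul_pos (sub_pos.2 hxb) (sub_pos.2 hax)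
  have h := ((((hasDerivAt_id x).const_sub b).mul ((hasDerivAt_id x).sub_const a)).sqrt
    hW.ne').div (hasDerivAt_id x) hx
  refine h.congr_deriv ?_
  have : 0 < √((b - x) * (x - a)) := sqrt_pos.2 hW
  simp only [id, Pi.mul_apply]
  field_simp
  rw [sq_sqrt (by nlinarith)]
  ring

lemma hasDerivAt_antiderivInvXsqDivSqrt (ha : 0 < a) (hax : a < x) (hxb : x < b) :
    HasDerivAt (antiderivInvXsqDivSqrt a b) (1 / (x ^ 2 * √((b - x) * (x - a)))) x := by
  have hx : 0 < x := ha.trans hax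
  have hb : 0 < b := hx.trans hxb
  have : 0 < √((b - x) * (x - a)) := sqrt_pos.2 (mul_pos (sub_pos.2 hxb) (sub_pos.2 hax))
  refine (((hasDerivAt_sqrt_mul_sub_div hax hxb hx.ne').add
    ((hasDerivAt_arcsin_arcsinArg_div_sqrt ha hax hxb).const_mul ((a + b) / 2))).div_const
    (a * b)).congr_deriv ?_
  field_simp
  ring

lemma continuousOn_antiderivInvXsqDivSqrt (ha : 0 < a) (hab : a < b) :
    ContinuousOn (antiderivInvXsqDivSqrt a b) (Icc a b) := by
  have hx : ∀ x ∈ Icc a b, x ≠ 0 := fun x hx => (ha.trans_le hx.1).ne'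
  refine ContinuousOn.div_const (ContinuousOn.add ?_ ?_) _
  · fun_prop (disch := exact hx)
  · exact ((continuous_arcsin.comp_continuousOn
      (continuousOn_arcsinArg hab.ne hx)).div_const _).const_mul _

lemma rpow_three_halves_eq_mul_sqrt (hx : 0 ≤ x) : x ^ (3 / 2 : ℝ) = x * √x := by
  rw [show (3 / 2 : ℝ) = 1 + 1 / 2 by norm_num, rpow_add' hx (by norm_num), rpow_one, sqrt_eq_rpow]

end

theorem integral_inv_xsq_div_sqrt (a b : ℝ) (ha : 0 < a) (hab : a < b) :
    ∫ x in a..b, 1 / (x ^ 2 * Real.sqrt ((b - x) * (x - a)))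
      = (a + b) * Real.pi / (2 * (a * b) ^ ((3 : ℝ) / 2)) := by
  have hb : 0 < b := ha.trans hab
  have hcont := continuousOn_antiderivInvXsqDivSqrt ha hab
  have hderiv : ∀ x ∈ Ioo a b, HasDerivAt (antiderivInvXsqDivSqrt a b)
      (1 / (x ^ 2 * √((b - x) * (x - a)))) x :=
    fun x hx => hasDerivAt_antiderivInvXsqDivSqrt ha hx.1 hx.2
  have hint : IntervalIntegrable (fun x => 1 / (x ^ 2 * √((b - x) * (x - a)))) volume a b := by
    refine intervalIntegrable_deriv_of_nonneg (g := antiderivInvXsqDivSqrt a b) ?_ ?_ ?_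
    all_goals simp only [uIcc_of_le hab.le, min_eq_left hab.le, max_eq_right hab.le]
    exacts [hcont, hderiv, fun x _ => by positivity]
  rw [integral_eq_sub_of_hasDerivAt_of_le hab.le hcont hderiv hint,
    rpow_three_halves_eq_mul_sqrt (mul_pos ha hb).le]
  simp only [antiderivInvXsqDivSqrt, arcsinArg_left ha.ne' hab.ne, arcsinArg_right hb.ne' hab.ne,
    arcsin_one, arcsin_neg_one, sub_self, mul_zero, zero_mul, sqrt_zero, zero_div, zero_add]
  have : 0 < √(a * b) := sqrt_pos.2 (mul_pos ha hb)
  field_simp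
  ring
end

section
/- For 0 < a < b, the integral of ln(x)/sqrt((b-x)(x-a)) over [a,b] equals 2π·ln((√a+√b)/2). -/
/-! Substituting `x = (a + b) / 2 + (b - a) / 2 * cos θ` turns the integral into
`∫ θ in 0..π, log ((a + b) / 2 + (b - a) / 2 * cos θ)`, half the integral over a full period.
With `α = (√a + √b) / 2` and `β = (√b - √a) / 2` the integrand is `log ‖α + β e^{iθ}‖²`, and
since `0 < β < α` the function `log ‖·‖` is harmonic on the disc of radius `β` around `α`, so its
circle average is `log α`. -/

open Real intervalIntegral

theorem integral_div_sqrt_one_sub_sq_eq_integral_comp_cos (g : ℝ → ℝ) :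
    ∫ t in (-1)..1, g t / √(1 - t ^ 2) = ∫ θ in 0..π, g (cos θ) := by
  have hderiv : ∀ θ ∈ Set.Ioo 0 π, HasDerivWithinAt cos (-sin θ) (Set.Ioo 0 π) θ :=
    fun θ _ ↦ (hasDerivAt_cos θ).hasDerivWithinAt
  have himage : cos '' Set.Ioo 0 π = Set.Ioo (-1) 1 := cosPartialHomeomorph.image_source_eq_target
  have hsubst := MeasureTheory.integral_image_eq_integral_abs_deriv_smul measurableSet_Ioo hderiv
    cosPartialHomeomorph.injOn (fun t ↦ g t / √(1 - t ^ 2))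
  rw [himage] at hsubst
  rw [integral_of_le (by norm_num), integral_of_le pi_pos.le,
    MeasureTheory.integral_Ioc_eq_integral_Ioo, MeasureTheory.integral_Ioc_eq_integral_Ioo, hsubst]
  refine MeasureTheory.setIntegral_congr_fun measurableSet_Ioo fun θ hθ ↦ ?_
  have hsin : 0 < sin θ := sin_pos_of_pos_of_lt_pi hθ.1 hθ.2
  rw [← sin_sq, sqrt_sq hsin.le, abs_neg, abs_of_pos hsin, smul_eq_mul, mul_div_cancel₀ _ hsin.ne']

theorem integral_div_sqrt_eq_integral_div_sqrt_one_sub_sq {a b : ℝ} (hab : a < b) (f : ℝ → ℝ) :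
    ∫ x in a..b, f x / √((b - x) * (x - a))
      = ∫ t in (-1)..1, f ((b - a) / 2 * t + (a + b) / 2) / √(1 - t ^ 2) := by
  have hc : 0 < (b - a) / 2 := by linarith
  have hsubst := integral_comp_mul_add (fun x ↦ f x / √((b - x) * (x - a))) hc.ne' ((a + b) / 2)
    (a := -1) (b := 1)
  have hlo : (b - a) / 2 * -1 + (a + b) / 2 = a := by ring
  have hhi : (b - a) / 2 * 1 + (a + b) / 2 = b := by ring
  rw [hlo, hhi, smul_eq_mul, eq_inv_mul_iff_mul_eq₀ hc.ne', ← integral_const_mul] at hsubst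
  rw [← hsubst]
  refine integral_congr fun t _ ↦ ?_
  have hprod : (b - ((b - a) / 2 * t + (a + b) / 2)) * ((b - a) / 2 * t + (a + b) / 2 - a)
      = ((b - a) / 2) ^ 2 * (1 - t ^ 2) := by ring
  simp only [hprod, sqrt_mul (sq_nonneg _), sqrt_sq hc.le, ← mul_div_assoc,
    mul_div_mul_left _ _ hc.ne']

theorem integral_div_sqrt_eq_integral_comp_cos {a b : ℝ} (hab : a < b) (f : ℝ → ℝ) :
    ∫ x in a..b, f x / √((b - x) * (x - a))
      = ∫ θ in 0..π, f ((b - a) / 2 * cos θ + (a + b) / 2) :=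
  (integral_div_sqrt_eq_integral_div_sqrt_one_sub_sq hab f).trans
    (integral_div_sqrt_one_sub_sq_eq_integral_comp_cos fun t ↦ f ((b - a) / 2 * t + (a + b) / 2))

theorem integral_comp_cos_zero_two_pi (g : ℝ → ℝ)
    (hg : IntervalIntegrable (fun θ ↦ g (cos θ)) MeasureTheory.volume 0 π) :
    ∫ θ in 0..2 * π, g (cos θ) = 2 * ∫ θ in 0..π, g (cos θ) := by
  have hreflect := integral_comp_sub_left (fun θ ↦ g (cos θ)) (2 * π) (a := 0) (b := π)
  simp only [cos_two_pi_sub, sub_zero, show 2 * π - π = π by ring] at hreflect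
  have hg' : IntervalIntegrable (fun θ ↦ g (cos θ)) MeasureTheory.volume π (2 * π) := by
    simpa [cos_two_pi_sub, show 2 * π - π = π by ring] using (hg.comp_sub_left (2 * π)).symm
  rw [← integral_add_adjacent_intervals hg hg', ← hreflect, two_mul]

theorem integral_log_norm_circleMap_of_lt_norm {c : ℂ} {R : ℝ} (hR : 0 < R) (hRc : R < ‖c‖) :
    ∫ θ in 0..2 * π, log ‖circleMap c R θ‖ = 2 * π * log ‖c‖ := by
  have hc : 0 < ‖c‖ := hR.trans hRc
  have hone : 1 ≤ |R⁻¹ * ‖c - 0‖| := by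
    rw [sub_zero, abs_of_pos (by positivity), le_inv_mul_iff₀ hR, mul_one]
    exact hRc.le
  have hlog : log R + log⁺ (R⁻¹ * ‖c - 0‖) = log ‖c‖ := by
    rw [posLog_eq_log hone, sub_zero, log_mul (inv_pos.2 hR).ne' hc.ne', log_inv]
    ring
  have havg := circleAverage_log_norm_sub_const_eq_log_radius_add_posLog (a := 0) (c := c) hR.ne'
  rw [circleAverage_def, hlog, smul_eq_mul, inv_mul_eq_iff_eq_mul₀ (by positivity)] at havg
  simpa using havg

theorem sq_norm_circleMap_ofReal (c R θ : ℝ) :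
    ‖circleMap c R θ‖ ^ 2 = c ^ 2 + R ^ 2 + 2 * c * R * cos θ := by
  rw [Complex.sq_norm, Complex.normSq_apply]
  simp only [circleMap, Complex.add_re, Complex.add_im, Complex.ofReal_re, Complex.ofReal_im,
    Complex.re_ofReal_mul, Complex.im_ofReal_mul, Complex.exp_ofReal_mul_I_re,
    Complex.exp_ofReal_mul_I_im, zero_add]
  linear_combination R ^ 2 * sin_sq_add_cos_sq θ

theorem integral_log_sq_add_sq_add_mul_cos {α β : ℝ} (hβ : 0 < β) (hβα : β < α) :
    ∫ θ in 0..π, log (α ^ 2 + β ^ 2 + 2 * α * β * cos θ) = 2 * π * log α := by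
  have hpos : ∀ θ, 0 < α ^ 2 + β ^ 2 + 2 * α * β * cos θ := fun θ ↦ by
    nlinarith [mul_nonneg (mul_pos (hβ.trans hβα) hβ).le (by linarith [neg_one_le_cos θ] :
      0 ≤ 1 + cos θ)]
  have hcont : Continuous fun θ ↦ log (α ^ 2 + β ^ 2 + 2 * α * β * cos θ) :=
    (by fun_prop : Continuous fun θ ↦ α ^ 2 + β ^ 2 + 2 * α * β * cos θ).log fun θ ↦ (hpos θ).ne'
  have hnorm : ‖(α : ℂ)‖ = α := by simp [abs_of_pos (hβ.trans hβα)]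
  have hcircle : ∀ θ, log (α ^ 2 + β ^ 2 + 2 * α * β * cos θ) = 2 * log ‖circleMap α β θ‖ :=
    fun θ ↦ by rw [← sq_norm_circleMap_ofReal, log_pow, Nat.cast_ofNat]
  have hfull := integral_comp_cos_zero_two_pi (fun t ↦ log (α ^ 2 + β ^ 2 + 2 * α * β * t))
    (hcont.intervalIntegrable 0 π)
  calc ∫ θ in 0..π, log (α ^ 2 + β ^ 2 + 2 * α * β * cos θ)
      = (∫ θ in 0..2 * π, log (α ^ 2 + β ^ 2 + 2 * α * β * cos θ)) / 2 := by rw [hfull]; ring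
    _ = (∫ θ in 0..2 * π, 2 * log ‖circleMap α β θ‖) / 2 := by simp only [hcircle]
    _ = 2 * π * log α := by
      rw [integral_const_mul, integral_log_norm_circleMap_of_lt_norm hβ (hnorm.symm ▸ hβα), hnorm]
      ring

theorem integral_log_div_sqrt (a b : ℝ) (ha : 0 < a) (hab : a < b) :
    ∫ x in a..b, Real.log x / Real.sqrt ((b - x) * (x - a))
      = 2 * Real.pi * Real.log ((Real.sqrt a + Real.sqrt b) / 2) := by
  have hsa := sq_sqrt ha.le
  have hsb := sq_sqrt (ha.trans hab).le
  have hβ : 0 < (√b - √a) / 2 := by linarith [sqrt_lt_sqrt ha.le hab]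
  have hβα : (√b - √a) / 2 < (√a + √b) / 2 := by linarith [sqrt_pos.2 ha]
  have hquad : ∀ θ, (b - a) / 2 * cos θ + (a + b) / 2
      = ((√a + √b) / 2) ^ 2 + ((√b - √a) / 2) ^ 2
        + 2 * ((√a + √b) / 2) * ((√b - √a) / 2) * cos θ :=
    fun θ ↦ by linear_combination (-(1 - cos θ) / 2) * hsa - (1 + cos θ) / 2 * hsb
  rw [integral_div_sqrt_eq_integral_comp_cos hab, ← integral_log_sq_add_sq_add_mul_cos hβ hβα]
  simp only [hquad]
end

section
/- If positive reals a, b, t, α, n satisfy 2n + α + t/√(ab) = (a+b)/2 and (a+b)t/(2(ab)^{3/2}) + α/√(ab) = 1, then X := √(ab) satisfies the quartic equation X⁴ − αX³ − (2n+α)tX − t² = 0. -/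
open Real

theorem geometric_mean_quartic (a b t α n : ℝ) (ha : 0 < a) (hab : a < b)
    (ht : 0 < t) (hα : 0 < α) (hn : 0 < n)
    (h1 : 2 * n + α + t / Real.sqrt (a * b) = (a + b) / 2)
    (h2 : (a + b) * t / (2 * (a * b) ^ ((3 : ℝ) / 2)) + α / Real.sqrt (a * b) = 1) :
    Real.sqrt (a * b) ^ 4 - α * Real.sqrt (a * b) ^ 3
      - (2 * n + α) * t * Real.sqrt (a * b) - t ^ 2 = 0 := by
  have hab0 : 0 < a * b := mul_pos ha (ha.trans hab)
  set X := Real.sqrt (a * b) with hXdef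
  have hX : 0 < X := Real.sqrt_pos.mpr hab0
  have hX2 : X ^ 2 = a * b := Real.sq_sqrt hab0.le
  have h3 : (a * b) ^ ((3 : ℝ) / 2) = X ^ 3 := by
    rw [← hX2, ← Real.rpow_natCast X 2, ← Real.rpow_mul hX.le,
      ← Real.rpow_natCast X 3]
    norm_num
  rw [h3] at h2
  have hX3 : X ^ 3 ≠ 0 := by positivity
  field_simp at h1 h2
  nlinarith [sq_nonneg X, sq_nonneg t, mul_pos hX ht]
end

section
/- If y : (0,∞) → ℝ is twice differentiable, nonvanishing, and satisfies y'' = (y')²/y − y'/t + (2n+1+α)y²/t² + y³/t² + α/t − 1/y on (0,∞), then the function X(t) := t/y(t) satisfies X'' = (X')²/X − X'/t − αX²/t² − (2n+1+α)/t + X³/t² − 1/X on (0,∞). -/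
open Real Filter Topology

section QuotientDerivatives

variable {𝕜 : Type*} [NontriviallyNormedField 𝕜] {y : 𝕜 → 𝕜} {t : 𝕜}

theorem hasDerivAt_id_div {y' : 𝕜} (hy : HasDerivAt y y' t) (hy0 : y t ≠ 0) :
    HasDerivAt (fun u => u / y u) ((y t - t * y') / y t ^ 2) t := by
  simpa using (hasDerivAt_id t).fun_div hy hy0

theorem deriv_id_div_eventuallyEq (hy : ∀ᶠ u in 𝓝 t, DifferentiableAt 𝕜 y u ∧ y u ≠ 0) :
    deriv (fun u => u / y u) =ᶠ[𝓝 t] fun u => (y u - u * deriv y u) / y u ^ 2 := by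
  filter_upwards [hy] with u ⟨hdiff, hy0⟩
  exact (hasDerivAt_id_div hdiff.hasDerivAt hy0).deriv

theorem hasDerivAt_deriv_id_div {y'' : 𝕜}
    (hy : ∀ᶠ u in 𝓝 t, DifferentiableAt 𝕜 y u ∧ y u ≠ 0)
    (hy'' : HasDerivAt (deriv y) y'' t) :
    HasDerivAt (deriv fun u => u / y u)
      (-(t * y'' * y t + 2 * (y t - t * deriv y t) * deriv y t) / y t ^ 3) t := by
  obtain ⟨hdiff, hy0⟩ := hy.self_of_nhds
  have hnum : HasDerivAt (fun u => y u - u * deriv y u)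
      (deriv y t - (1 * deriv y t + t * y'')) t :=
    hdiff.hasDerivAt.sub ((hasDerivAt_id t).mul hy'')
  have hden : HasDerivAt (fun u => y u ^ 2) (2 * y t * deriv y t) t := by
    simpa using hdiff.hasDerivAt.fun_pow 2
  refine ((hnum.fun_div hden (pow_ne_zero 2 hy0)).congr_of_eventuallyEq
    (deriv_id_div_eventuallyEq hy)).congr_deriv ?_
  field_simp
  ring

end QuotientDerivatives

theorem painleve_transform_y_to_X (α n : ℝ) (y : ℝ → ℝ)
    (hy1 : ∀ t ∈ Set.Ioi (0 : ℝ), DifferentiableAt ℝ y t)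
    (hy2 : ∀ t ∈ Set.Ioi (0 : ℝ), DifferentiableAt ℝ (deriv y) t)
    (hy0 : ∀ t ∈ Set.Ioi (0 : ℝ), y t ≠ 0)
    (hode : ∀ t ∈ Set.Ioi (0 : ℝ), deriv (deriv y) t =
      (deriv y t) ^ 2 / y t - deriv y t / t + (2 * n + 1 + α) * (y t) ^ 2 / t ^ 2
        + (y t) ^ 3 / t ^ 2 + α / t - 1 / y t) :
    ∀ t ∈ Set.Ioi (0 : ℝ),
      deriv (deriv (fun u => u / y u)) t =
        (deriv (fun u => u / y u) t) ^ 2 / (t / y t) - deriv (fun u => u / y u) t / t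
          - α * (t / y t) ^ 2 / t ^ 2 - (2 * n + 1 + α) / t
          + (t / y t) ^ 3 / t ^ 2 - 1 / (t / y t) := by
  intro t ht
  have hregular : ∀ᶠ u in 𝓝 t, DifferentiableAt ℝ y u ∧ y u ≠ 0 := by
    filter_upwards [isOpen_Ioi.mem_nhds ht] with u hu using ⟨hy1 u hu, hy0 u hu⟩
  have ht0 : t ≠ 0 := ht.ne'
  have hyt := hy0 t ht
  rw [(hasDerivAt_deriv_id_div hregular (hy2 t ht).hasDerivAt).deriv,
    (hasDerivAt_id_div (hy1 t ht).hasDerivAt hyt).deriv, hode t ht]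
  field_simp
  ring
end

section
/- If C : (0,∞) → ℝ is twice differentiable, nonvanishing, and satisfies C''(s) = (C'(s))²/C(s) − C'(s)/s + C(s)²/s + α/s² − 1/(s²C(s)), then Y(x) := (x/2)·C(x²/8) satisfies Y'' = (Y')²/Y − Y'/x + Y²/x − 1/Y + 2α/x on (0,∞). -/
/-!
With `s = x² / 8` we have `ds/dx = x / 4`, so the chain rule gives
`Y' = C(s) / 2 + s C'(s)` and `Y'' = (x / 8) (3 C'(s) + 2 s C''(s))`.
Substituting the equation for `C''` and clearing the denominators `x` and `C(s)` turns this
into the Painlevé III equation for `Y`.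
-/

open Filter Topology

section ScaledComp

variable {C : ℝ → ℝ}

theorem hasDerivAt_sq_div_eight (y : ℝ) : HasDerivAt (fun u : ℝ => u ^ 2 / 8) (y / 4) y :=
  ((hasDerivAt_pow 2 y).div_const 8).congr_deriv (by ring)

theorem hasDerivAt_mul_comp_sq_div_eight {y : ℝ} (hC : DifferentiableAt ℝ C (y ^ 2 / 8)) :
    HasDerivAt (fun u => (u / 2) * C (u ^ 2 / 8))
      (C (y ^ 2 / 8) / 2 + (y ^ 2 / 8) * deriv C (y ^ 2 / 8)) y :=
  (((hasDerivAt_id' y).div_const 2).mul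
    (hC.hasDerivAt.comp y (hasDerivAt_sq_div_eight y))).congr_deriv
    (by simp only [Function.comp_apply]; ring)

theorem deriv_mul_comp_sq_div_eight_eventuallyEq {x : ℝ} (hx : 0 < x)
    (hC : ∀ s ∈ Set.Ioi (0 : ℝ), DifferentiableAt ℝ C s) :
    deriv (fun u => (u / 2) * C (u ^ 2 / 8)) =ᶠ[𝓝 x]
      fun y => C (y ^ 2 / 8) / 2 + (y ^ 2 / 8) * deriv C (y ^ 2 / 8) := by
  filter_upwards [Ioi_mem_nhds hx] with y (hy : 0 < y)
  exact (hasDerivAt_mul_comp_sq_div_eight (hC _ (Set.mem_Ioi.2 (by positivity)))).deriv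

theorem hasDerivAt_deriv_mul_comp_sq_div_eight {x : ℝ} (hx : 0 < x)
    (hC : ∀ s ∈ Set.Ioi (0 : ℝ), DifferentiableAt ℝ C s)
    (hC' : DifferentiableAt ℝ (deriv C) (x ^ 2 / 8)) :
    HasDerivAt (deriv fun u => (u / 2) * C (u ^ 2 / 8))
      (x / 8 * (3 * deriv C (x ^ 2 / 8) + 2 * (x ^ 2 / 8) * deriv (deriv C) (x ^ 2 / 8))) x := by
  have hq := hasDerivAt_sq_div_eight x
  have h1 := ((hC _ (by positivity : 0 < x ^ 2 / 8)).hasDerivAt.comp x hq).div_const 2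
  have h2 := hq.mul (hC'.hasDerivAt.comp x hq)
  have hg : HasDerivAt (fun y => C (y ^ 2 / 8) / 2 + (y ^ 2 / 8) * deriv C (y ^ 2 / 8))
      (deriv C (x ^ 2 / 8) * (x / 4) / 2 +
        ((x / 4) * deriv C (x ^ 2 / 8) + (x ^ 2 / 8) * (deriv (deriv C) (x ^ 2 / 8) * (x / 4)))) x :=
    h1.add h2
  exact (hg.congr_deriv (by ring)).congr_of_eventuallyEq
    (deriv_mul_comp_sq_div_eight_eventuallyEq hx hC)

end ScaledComp

theorem painleve_transform_C_to_Y (α : ℝ) (C : ℝ → ℝ)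
    (hC1 : ∀ s ∈ Set.Ioi (0 : ℝ), DifferentiableAt ℝ C s)
    (hC2 : ∀ s ∈ Set.Ioi (0 : ℝ), DifferentiableAt ℝ (deriv C) s)
    (hC0 : ∀ s ∈ Set.Ioi (0 : ℝ), C s ≠ 0)
    (hode : ∀ s ∈ Set.Ioi (0 : ℝ), deriv (deriv C) s =
      (deriv C s) ^ 2 / C s - deriv C s / s + (C s) ^ 2 / s + α / s ^ 2
        - 1 / (s ^ 2 * C s)) :
    ∀ x ∈ Set.Ioi (0 : ℝ),
      deriv (deriv (fun u => (u / 2) * C (u ^ 2 / 8))) x =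
        (deriv (fun u => (u / 2) * C (u ^ 2 / 8)) x) ^ 2 / ((x / 2) * C (x ^ 2 / 8))
          - deriv (fun u => (u / 2) * C (u ^ 2 / 8)) x / x
          + ((x / 2) * C (x ^ 2 / 8)) ^ 2 / x
          - 1 / ((x / 2) * C (x ^ 2 / 8)) + 2 * α / x := by
  intro x (hx : 0 < x)
  have hs : (0 : ℝ) < x ^ 2 / 8 := by positivity
  rw [(hasDerivAt_deriv_mul_comp_sq_div_eight hx hC1 (hC2 _ hs)).deriv,
    (hasDerivAt_mul_comp_sq_div_eight (hC1 _ hs)).deriv, hode _ hs]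
  have hCs := hC0 _ hs
  field_simp
  ring
end

section
/- For α = 1, the function C(s) = s^{−1/3} − (1/3)s^{−2/3} satisfies C'' = (C')²/C − C'/s + C²/s + α/s² − 1/(s²C) at every s > 0 where C(s) ≠ 0. -/
/-! The derivatives of `a s^p - b s^q` are again combinations of `s^p` and `s^q`. Writing
`t = s^(-1/3)`, we have `s^(-2/3) = t²` and `s = t⁻³`, so `C`, `s C'`, `s² C''` are polynomials
in `t` and the ODE becomes a rational identity in `t`. -/

open Real Filter Topology

section RpowCombination
variable {a b p q s : ℝ}

theorem hasDerivAt_const_mul_rpow_sub_const_mul_rpow (hs : 0 < s) :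
    HasDerivAt (fun u => a * u ^ p - b * u ^ q) (a * p * s ^ (p - 1) - b * q * s ^ (q - 1)) s := by
  have hp := (hasDerivAt_rpow_const (p := p) (Or.inl hs.ne')).const_mul a
  have hq := (hasDerivAt_rpow_const (p := q) (Or.inl hs.ne')).const_mul b
  exact (hp.sub hq).congr_deriv (by ring)

theorem deriv_const_mul_rpow_sub_const_mul_rpow (hs : 0 < s) :
    deriv (fun u => a * u ^ p - b * u ^ q) s = (a * p * s ^ p - b * q * s ^ q) / s := by
  rw [(hasDerivAt_const_mul_rpow_sub_const_mul_rpow hs).deriv, rpow_sub_one hs.ne',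
    rpow_sub_one hs.ne']
  ring

theorem deriv_deriv_const_mul_rpow_sub_const_mul_rpow (hs : 0 < s) :
    deriv (deriv fun u => a * u ^ p - b * u ^ q) s =
      (a * p * (p - 1) * s ^ p - b * q * (q - 1) * s ^ q) / s ^ 2 := by
  have h : deriv (fun u => a * u ^ p - b * u ^ q) =ᶠ[𝓝 s]
      fun u => a * p * u ^ (p - 1) - b * q * u ^ (q - 1) := by
    filter_upwards [Ioi_mem_nhds hs] with u hu
    exact (hasDerivAt_const_mul_rpow_sub_const_mul_rpow hu).deriv
  rw [h.deriv_eq, deriv_const_mul_rpow_sub_const_mul_rpow hs, rpow_sub_one hs.ne',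
    rpow_sub_one hs.ne']
  field_simp

end RpowCombination

theorem algebraic_solution_alpha_one (α : ℝ) (hα : α = 1) :
    ∀ s ∈ Set.Ioi (0 : ℝ),
      s ^ (-(1 : ℝ) / 3) - (1 / 3) * s ^ (-(2 : ℝ) / 3) ≠ 0 →
      deriv (deriv (fun u : ℝ => u ^ (-(1 : ℝ) / 3) - (1 / 3) * u ^ (-(2 : ℝ) / 3))) s =
        (deriv (fun u : ℝ => u ^ (-(1 : ℝ) / 3) - (1 / 3) * u ^ (-(2 : ℝ) / 3)) s) ^ 2
            / (s ^ (-(1 : ℝ) / 3) - (1 / 3) * s ^ (-(2 : ℝ) / 3))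
          - deriv (fun u : ℝ => u ^ (-(1 : ℝ) / 3) - (1 / 3) * u ^ (-(2 : ℝ) / 3)) s / s
          + (s ^ (-(1 : ℝ) / 3) - (1 / 3) * s ^ (-(2 : ℝ) / 3)) ^ 2 / s + α / s ^ 2
          - 1 / (s ^ 2 * (s ^ (-(1 : ℝ) / 3) - (1 / 3) * s ^ (-(2 : ℝ) / 3))) := by
  rintro s (hs : 0 < s) hC
  subst hα
  have hf : (fun u : ℝ => u ^ (-(1 : ℝ) / 3) - 1 / 3 * u ^ (-(2 : ℝ) / 3)) =
      fun u => 1 * u ^ (-(1 : ℝ) / 3) - 1 / 3 * u ^ (-(2 : ℝ) / 3) := by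
    simp only [one_mul]
  have hsq : s ^ (-(2 : ℝ) / 3) = (s ^ (-(1 : ℝ) / 3)) ^ 2 := by
    rw [← rpow_natCast, ← rpow_mul hs.le]
    norm_num
  have hcube : s * (s ^ (-(1 : ℝ) / 3)) ^ 3 = 1 := by
    rw [← rpow_natCast, ← rpow_mul hs.le]
    norm_num [rpow_neg_one, hs.ne']
  rw [hsq] at hC
  rw [hf, deriv_deriv_const_mul_rpow_sub_const_mul_rpow hs,
    deriv_const_mul_rpow_sub_const_mul_rpow hs, hsq]
  generalize s ^ (-(1 : ℝ) / 3) = t at hC hcube ⊢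
  obtain ⟨ht, ht3⟩ : t ≠ 0 ∧ 3 - t ≠ 0 := by
    rw [← mul_ne_zero_iff]
    contrapose! hC
    linear_combination hC / 3
  obtain rfl : s = (t ^ 3)⁻¹ := eq_inv_of_mul_eq_one_left hcube
  field_simp
  ring
end

section
/- For α = −1, the function C(s) = s^{−1/3} + (1/3)s^{−2/3} satisfies C'' = (C')²/C − C'/s + C²/s + α/s² − 1/(s²C) on (0,∞). -/
open Real

private lemma hd1 (x : ℝ) (hx : 0 < x) :
    HasDerivAt (fun u : ℝ => u ^ (-(1 : ℝ) / 3) + (1 / 3) * u ^ (-(2 : ℝ) / 3))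
      ((-(1:ℝ)/3) * x ^ (-(1:ℝ)/3 - 1) + (1/3) * ((-(2:ℝ)/3) * x ^ (-(2:ℝ)/3 - 1))) x :=
  (Real.hasDerivAt_rpow_const (Or.inl hx.ne')).add
    ((Real.hasDerivAt_rpow_const (Or.inl hx.ne')).const_mul _)

private lemma hd2 (x : ℝ) (hx : 0 < x) :
    HasDerivAt (fun u : ℝ => (-(1:ℝ)/3) * u ^ (-(1:ℝ)/3 - 1) + (1/3) * ((-(2:ℝ)/3) * u ^ (-(2:ℝ)/3 - 1)))
      ((-(1:ℝ)/3) * ((-(1:ℝ)/3 - 1) * x ^ (-(1:ℝ)/3 - 1 - 1))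
        + (1/3) * ((-(2:ℝ)/3) * ((-(2:ℝ)/3 - 1) * x ^ (-(2:ℝ)/3 - 1 - 1)))) x :=
  ((Real.hasDerivAt_rpow_const (Or.inl hx.ne')).const_mul _).add
    (((Real.hasDerivAt_rpow_const (Or.inl hx.ne')).const_mul _).const_mul _)

theorem algebraic_solution_alpha_neg_one (α : ℝ) (hα : α = -1) :
    ∀ s ∈ Set.Ioi (0 : ℝ),
      deriv (deriv (fun u : ℝ => u ^ (-(1 : ℝ) / 3) + (1 / 3) * u ^ (-(2 : ℝ) / 3))) s =
        (deriv (fun u : ℝ => u ^ (-(1 : ℝ) / 3) + (1 / 3) * u ^ (-(2 : ℝ) / 3)) s) ^ 2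
            / (s ^ (-(1 : ℝ) / 3) + (1 / 3) * s ^ (-(2 : ℝ) / 3))
          - deriv (fun u : ℝ => u ^ (-(1 : ℝ) / 3) + (1 / 3) * u ^ (-(2 : ℝ) / 3)) s / s
          + (s ^ (-(1 : ℝ) / 3) + (1 / 3) * s ^ (-(2 : ℝ) / 3)) ^ 2 / s + α / s ^ 2
          - 1 / (s ^ 2 * (s ^ (-(1 : ℝ) / 3) + (1 / 3) * s ^ (-(2 : ℝ) / 3))) := by
  intro s hs
  rw [Set.mem_Ioi] at hs
  subst hα
  -- first derivative
  have h1 : deriv (fun u : ℝ => u ^ (-(1 : ℝ) / 3) + (1 / 3) * u ^ (-(2 : ℝ) / 3)) s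
      = (-(1:ℝ)/3) * s ^ (-(1:ℝ)/3 - 1) + (1/3) * ((-(2:ℝ)/3) * s ^ (-(2:ℝ)/3 - 1)) :=
    (hd1 s hs).deriv
  -- deriv f agrees with g on a neighborhood
  have hEq : deriv (fun u : ℝ => u ^ (-(1 : ℝ) / 3) + (1 / 3) * u ^ (-(2 : ℝ) / 3))
      =ᶠ[nhds s] fun u : ℝ => (-(1:ℝ)/3) * u ^ (-(1:ℝ)/3 - 1) + (1/3) * ((-(2:ℝ)/3) * u ^ (-(2:ℝ)/3 - 1)) := by
    filter_upwards [isOpen_Ioi.mem_nhds (Set.mem_Ioi.mpr hs)] with x hx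
    exact (hd1 x (Set.mem_Ioi.mp hx)).deriv
  have h2 : deriv (deriv (fun u : ℝ => u ^ (-(1 : ℝ) / 3) + (1 / 3) * u ^ (-(2 : ℝ) / 3))) s
      = (-(1:ℝ)/3) * ((-(1:ℝ)/3 - 1) * s ^ (-(1:ℝ)/3 - 1 - 1))
        + (1/3) * ((-(2:ℝ)/3) * ((-(2:ℝ)/3 - 1) * s ^ (-(2:ℝ)/3 - 1 - 1))) := by
    rw [hEq.deriv_eq]
    exact (hd2 s hs).deriv
  rw [h1, h2]
  set t : ℝ := s ^ ((1:ℝ)/3) with ht_def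
  have ht : 0 < t := Real.rpow_pos_of_pos hs _
  have hpow : ∀ k : ℕ, s ^ (-(k:ℝ)/3) = (t ^ k)⁻¹ := by
    intro k
    rw [ht_def, ← Real.rpow_natCast (s ^ ((1:ℝ)/3)) k, ← Real.rpow_mul hs.le,
        ← Real.rpow_neg hs.le]
    ring_nf
  have hs3 : s = t ^ 3 := by
    rw [ht_def, ← Real.rpow_natCast (s ^ ((1:ℝ)/3)) 3, ← Real.rpow_mul hs.le]
    norm_num
  have e1 : s ^ (-(1:ℝ)/3) = (t ^ 1)⁻¹ := by exact_mod_cast hpow 1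
  have e2 : s ^ (-(2:ℝ)/3) = (t ^ 2)⁻¹ := by exact_mod_cast hpow 2
  have e4 : s ^ (-(1:ℝ)/3 - 1) = (t ^ 4)⁻¹ := by
    rw [show -(1:ℝ)/3 - 1 = -(4:ℕ)/3 by norm_num]; exact_mod_cast hpow 4
  have e5 : s ^ (-(2:ℝ)/3 - 1) = (t ^ 5)⁻¹ := by
    rw [show -(2:ℝ)/3 - 1 = -(5:ℕ)/3 by norm_num]; exact_mod_cast hpow 5
  have e7 : s ^ (-(1:ℝ)/3 - 1 - 1) = (t ^ 7)⁻¹ := by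
    rw [show -(1:ℝ)/3 - 1 - 1 = -(7:ℕ)/3 by norm_num]; exact_mod_cast hpow 7
  have e8 : s ^ (-(2:ℝ)/3 - 1 - 1) = (t ^ 8)⁻¹ := by
    rw [show -(2:ℝ)/3 - 1 - 1 = -(8:ℕ)/3 by norm_num]; exact_mod_cast hpow 8
  rw [e1, e2, e4, e5, e7, e8, hs3]
  have hC : (t ^ 1)⁻¹ + 1/3 * (t ^ 2)⁻¹ ≠ 0 := by positivity
  have ht' : t ≠ 0 := ht.ne'
  field_simp
  ring
end
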